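/- Let 𝔅 be a bornology with closed base on a metric space X. If X has the 𝔅ˢ-Hurewicz property, then every countable open 𝔅ˢ-cover of X is 𝔅ˢ-groupable. -/

import Mathlib

open Set Metric Filter

/-- A bornology on a metric space: an ideal of subsets covering `X`. -/
structure BornologyOn (X : Type*) [MetricSpace X] where
  sets : Set (Set X)
  union_mem : ∀ {A B : Set X}, A ∈ sets → B ∈ sets → A ∪ B ∈ sets
  subset_mem : ∀ {A B : Set X}, A ∈ sets → B ⊆ A → B ∈ sets
  covers : ∀ x : X, ∃ A ∈ sets, x ∈ A

variable {X : Type*} [MetricSpace X]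

/-- `𝔅` has a closed base: a cofinal subfamily consisting of closed sets. -/
def HasClosedBase (𝔅 : BornologyOn X) : Prop :=
  ∃ base ⊆ 𝔅.sets, (∀ C ∈ base, IsClosed C) ∧ ∀ A ∈ 𝔅.sets, ∃ C ∈ base, A ⊆ C

/-- The `δ`-enlargement `B^δ = ⋃_{x ∈ B} S(x, δ)`. -/
def enlarge (B : Set X) (δ : ℝ) : Set X := ⋃ x ∈ B, ball x δ

/-- A `𝔅ˢ`-cover: `X ∉ 𝒰` and every `B ∈ 𝔅` has `B^δ ⊆ U` for some `U ∈ 𝒰`, `δ > 0`. -/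
def IsBCover (𝔅 : BornologyOn X) (𝒰 : Set (Set X)) : Prop :=
  univ ∉ 𝒰 ∧ ∀ B ∈ 𝔅.sets, ∃ U ∈ 𝒰, ∃ δ > 0, enlarge B δ ⊆ U

/-- An open `𝔅ˢ`-cover. -/
def IsOpenBCover (𝔅 : BornologyOn X) (𝒰 : Set (Set X)) : Prop :=
  (∀ U ∈ 𝒰, IsOpen U) ∧ (∀ x : X, ∃ U ∈ 𝒰, x ∈ U) ∧ IsBCover 𝔅 𝒰

/-- A `γ_{𝔅ˢ}`-cover (set form): infinite family of open sets such that for each `B ∈ 𝔅`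
all but finitely many members contain some enlargement of `B`. -/
def IsGammaBCover (𝔅 : BornologyOn X) (𝒰 : Set (Set X)) : Prop :=
  𝒰.Infinite ∧ (∀ U ∈ 𝒰, IsOpen U) ∧
    ∀ B ∈ 𝔅.sets, {U ∈ 𝒰 | ¬ ∃ δ > 0, enlarge B δ ⊆ U}.Finite

/-- A `γ_{𝔅ˢ}`-cover given as a sequence `{Uₙ}`: infinite, open, and for each `B ∈ 𝔅`
there are `n₀` and `δₙ > 0` with `B^{δₙ} ⊆ Uₙ` for all `n ≥ n₀`. -/
def IsGammaBSeq (𝔅 : BornologyOn X) (U : ℕ → Set X) : Prop :=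
  (Set.range U).Infinite ∧ (∀ n, IsOpen (U n)) ∧
    ∀ B ∈ 𝔅.sets, ∃ n₀, ∀ n ≥ n₀, ∃ δ > 0, enlarge B δ ⊆ U n

/-- A `γ`-cover: infinite family of open sets, every point in all but finitely many members. -/
def IsGammaCover (𝒰 : Set (Set X)) : Prop :=
  𝒰.Infinite ∧ (∀ U ∈ 𝒰, IsOpen U) ∧ ∀ x : X, {U ∈ 𝒰 | x ∉ U}.Finite

/-- An open cover of `X`. -/
def IsOpenCover (𝒰 : Set (Set X)) : Prop :=
  (∀ U ∈ 𝒰, IsOpen U) ∧ ∀ x : X, ∃ U ∈ 𝒰, x ∈ U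

/-- The family `𝒪_{𝔅ˢ}` of countable open `𝔅ˢ`-covers. -/
def OBs (𝔅 : BornologyOn X) : Set (Set (Set X)) :=
  {𝒰 | 𝒰.Countable ∧ IsOpenBCover 𝔅 𝒰}

/-- The family `Γ_{𝔅ˢ}` of countable `γ_{𝔅ˢ}`-covers. -/
def GBs (𝔅 : BornologyOn X) : Set (Set (Set X)) :=
  {𝒰 | 𝒰.Countable ∧ IsGammaBCover 𝔅 𝒰}

/-- The family `𝒪` of countable open covers. -/
def Ocov (X : Type*) [MetricSpace X] : Set (Set (Set X)) :=
  {𝒰 | 𝒰.Countable ∧ IsOpenCover 𝒰}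

/-- The selection principle `S₁(𝒜, ℬ)`. -/
def S1 (𝒜 ℬ : Set (Set (Set X))) : Prop :=
  ∀ 𝒰 : ℕ → Set (Set X), (∀ n, 𝒰 n ∈ 𝒜) →
    ∃ sel : ℕ → Set X, (∀ n, sel n ∈ 𝒰 n) ∧ Set.range sel ∈ ℬ

/-- The selection principle `S_fin(𝒜, ℬ)`. -/
def Sfin (𝒜 ℬ : Set (Set (Set X))) : Prop :=
  ∀ 𝒰 : ℕ → Set (Set X), (∀ n, 𝒰 n ∈ 𝒜) →
    ∃ 𝒱 : ℕ → Set (Set X), (∀ n, 𝒱 n ⊆ 𝒰 n ∧ (𝒱 n).Finite) ∧ (⋃ n, 𝒱 n) ∈ ℬ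

/-- The selection principle `U_fin(𝒜, ℬ)`. -/
def Ufin (𝒜 ℬ : Set (Set (Set X))) : Prop :=
  ∀ 𝒰 : ℕ → Set (Set X), (∀ n, 𝒰 n ∈ 𝒜) →
    ∃ 𝒱 : ℕ → Set (Set X), (∀ n, 𝒱 n ⊆ 𝒰 n ∧ (𝒱 n).Finite) ∧
      ((Set.range fun n => ⋃₀ 𝒱 n) ∈ ℬ ∨ ∃ n, ⋃₀ 𝒱 n = univ)

/-- ONE has a winning strategy in `G₁(𝒜, ℬ)`. -/
def OneWinsG1 (𝒜 ℬ : Set (Set (Set X))) : Prop :=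
  ∃ σ : List (Set X) → Set (Set X),
    (∀ h, σ h ∈ 𝒜) ∧
    ∀ play : ℕ → Set X,
      (∀ n, play n ∈ σ (List.ofFn fun i : Fin n => play i.1)) →
      Set.range play ∉ ℬ

/-- ONE has a winning strategy in `G_fin(𝒜, ℬ)`. -/
def OneWinsGfin (𝒜 ℬ : Set (Set (Set X))) : Prop :=
  ∃ σ : List (Set (Set X)) → Set (Set X),
    (∀ h, σ h ∈ 𝒜) ∧
    ∀ play : ℕ → Set (Set X),
      (∀ n, play n ⊆ σ (List.ofFn fun i : Fin n => play i.1) ∧ (play n).Finite) →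
      (⋃ n, play n) ∉ ℬ

/-- The winning condition in the `𝔅ˢ`-Hurewicz game / property: every `B ∈ 𝔅` is
eventually `δ`-enlarged into some member of `𝒱ₙ`. -/
def HurSel (𝔅 : BornologyOn X) (𝒱 : ℕ → Set (Set X)) : Prop :=
  ∀ B ∈ 𝔅.sets, ∃ n₀, ∀ n ≥ n₀, ∃ δ > 0, ∃ U ∈ 𝒱 n, enlarge B δ ⊆ U

/-- The strong `𝔅`-Hurewicz property. -/
def BsHurewicz (𝔅 : BornologyOn X) : Prop :=
  ∀ 𝒰 : ℕ → Set (Set X), (∀ n, 𝒰 n ∈ OBs 𝔅) →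
    ∃ 𝒱 : ℕ → Set (Set X), (∀ n, 𝒱 n ⊆ 𝒰 n ∧ (𝒱 n).Finite) ∧ HurSel 𝔅 𝒱

/-- ONE has a winning strategy in the `𝔅ˢ`-Hurewicz game. -/
def OneWinsHurewicz (𝔅 : BornologyOn X) : Prop :=
  ∃ σ : List (Set (Set X)) → Set (Set X),
    (∀ h, σ h ∈ OBs 𝔅) ∧
    ∀ play : ℕ → Set (Set X),
      (∀ n, play n ⊆ σ (List.ofFn fun i : Fin n => play i.1) ∧ (play n).Finite) →
      ¬ HurSel 𝔅 play

/-- A `𝔅ˢ`-groupable cover. -/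
def BsGroupable (𝔅 : BornologyOn X) (𝒰 : Set (Set X)) : Prop :=
  ∃ 𝒢 : ℕ → Set (Set X), (∀ n, (𝒢 n).Finite) ∧
    (∀ m n, m ≠ n → Disjoint (𝒢 m) (𝒢 n)) ∧ (⋃ n, 𝒢 n) = 𝒰 ∧ HurSel 𝔅 𝒢

/-- The family `𝒪_{𝔅ˢ}^{gp}` of `𝔅ˢ`-groupable open covers. -/
def OBsgp (𝔅 : BornologyOn X) : Set (Set (Set X)) :=
  {𝒰 | IsOpenCover 𝒰 ∧ BsGroupable 𝔅 𝒰}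

/-- The basic `τ_𝔅ˢ` neighbourhood `[B, ε]ˢ(f)` in `C(X)`. -/
def sball (f : C(X, ℝ)) (B : Set X) (ε : ℝ) : Set C(X, ℝ) :=
  {g | ∃ δ > 0, ∀ x ∈ enlarge B δ, |f x - g x| < ε}

/-- The topology `τ_𝔅ˢ` of strong uniform convergence on `𝔅` on `C(X)`. -/
def tauBs (𝔅 : BornologyOn X) : TopologicalSpace C(X, ℝ) :=
  TopologicalSpace.generateFrom
    {S | ∃ f : C(X, ℝ), ∃ B ∈ 𝔅.sets, ∃ ε > 0, S = sball f B ε}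

/-- Countable `T`-tightness of a topological space. -/
def CountableTTightness {Y : Type*} (t : TopologicalSpace Y) : Prop :=
  ∀ ρ : Cardinal.{0}, ρ.IsRegular → Cardinal.aleph0 < ρ →
    ∀ A : Ordinal.{0} → Set Y, (∀ α β, α ≤ β → A α ⊆ A β) →
      (∀ α, α < ρ.ord → @IsClosed _ t (A α)) →
      @IsClosed _ t (⋃ α ∈ {α | α < ρ.ord}, A α)

/-
Enumerate the countable cover as an increasing union of finite families `F n`. Every tail
`𝒰 \ F n` is again a countable open `𝔅ˢ`-cover: a finite family of proper subsets `V` can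
be avoided by adding to `B ∈ 𝔅` one point outside each `V`. Applying the `𝔅ˢ`-Hurewicz
property to the tails gives finite `𝒱 n ⊆ 𝒰 \ F n`; choosing indices `m 0 < m 1 < ⋯` with
`𝒱 (m k) ⊆ F (m (k + 1))`, the blocks `F (m (k + 1)) \ F (m k)` are disjoint, exhaust `𝒰`,
and the `(k + 1)`-st block contains `𝒱 (m k)`.
-/

lemma Set.Countable.exists_monotone_finite_iUnion_eq {α : Type*} {s : Set α}
    (hs : s.Countable) :
    ∃ F : ℕ → Set α, Monotone F ∧ (∀ n, (F n).Finite) ∧ ⋃ n, F n = s := by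
  obtain ⟨g, hg⟩ := Set.countable_iff_exists_injOn.1 hs
  refine ⟨fun n => {a ∈ s | g a < n}, fun m n hmn a ha => ⟨ha.1, ha.2.trans_le hmn⟩,
    fun n => ?_, ?_⟩
  · refine Set.Finite.of_finite_image ((finite_Iio n).subset ?_) (hg.mono (sep_subset _ _))
    rintro _ ⟨a, ha, rfl⟩
    exact ha.2
  · ext a
    simp only [mem_iUnion]
    exact ⟨fun ⟨_, ha, _⟩ => ha, fun ha => ⟨g a + 1, ha, Nat.lt_succ_self _⟩⟩

lemma Monotone.exists_lt_subset_of_finite {α : Type*} {F : ℕ → Set α} (hF : Monotone F)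
    {s : Set α} (hs : s.Finite) (hsF : s ⊆ ⋃ n, F n) (n : ℕ) : ∃ M, n < M ∧ s ⊆ F M := by
  have hev : ∀ᶠ M in atTop, s ⊆ F M := by
    refine (hs.eventually_all (p := fun a M => a ∈ F M)).2 fun a ha => ?_
    obtain ⟨k, hk⟩ := mem_iUnion.1 (hsF ha)
    exact (eventually_ge_atTop k).mono fun M hkM => hF hkM hk
  exact ((eventually_gt_atTop n).and hev).exists

section

variable {𝔅 : BornologyOn X}

lemma BornologyOn.insert_mem {B : Set X} (hB : B ∈ 𝔅.sets) (x : X) : insert x B ∈ 𝔅.sets := by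
  obtain ⟨A, hA, hxA⟩ := 𝔅.covers x
  rw [insert_eq]
  exact 𝔅.union_mem (𝔅.subset_mem hA (singleton_subset_iff.2 hxA)) hB

lemma subset_enlarge {B : Set X} {δ : ℝ} (hδ : 0 < δ) : B ⊆ enlarge B δ :=
  fun _ hx => mem_biUnion hx (mem_ball_self hδ)

lemma enlarge_mono {B B' : Set X} (h : B ⊆ B') (δ : ℝ) : enlarge B δ ⊆ enlarge B' δ :=
  biUnion_subset_biUnion_left h

namespace IsBCover

variable {𝒰 : Set (Set X)}

lemma exists_mem (h : IsBCover 𝔅 𝒰) (x : X) : ∃ U ∈ 𝒰, x ∈ U := by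
  obtain ⟨A, hA, hxA⟩ := 𝔅.covers x
  obtain ⟨U, hU, δ, hδ, hAU⟩ := h.2 A hA
  exact ⟨U, hU, hAU (subset_enlarge hδ hxA)⟩

lemma diff_singleton (h : IsBCover 𝔅 𝒰) (V : Set X) : IsBCover 𝔅 (𝒰 \ {V}) := by
  refine ⟨fun hu => h.1 hu.1, fun B hB => ?_⟩
  by_cases hV : V = univ
  · obtain ⟨U, hU, δ, hδ, hBU⟩ := h.2 B hB
    exact ⟨U, ⟨hU, fun hUV => h.1 (hV ▸ hUV ▸ hU)⟩, δ, hδ, hBU⟩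
  · obtain ⟨x, hxV⟩ := (ne_univ_iff_exists_notMem V).1 hV
    obtain ⟨U, hU, δ, hδ, hBU⟩ := h.2 _ (BornologyOn.insert_mem hB x)
    have hxU : x ∈ U := hBU (subset_enlarge hδ (mem_insert x B))
    exact ⟨U, ⟨hU, fun hUV => hxV (hUV ▸ hxU)⟩, δ, hδ,
      (enlarge_mono (subset_insert x B) δ).trans hBU⟩

lemma diff_finite (h : IsBCover 𝔅 𝒰) {F : Set (Set X)} (hF : F.Finite) :
    IsBCover 𝔅 (𝒰 \ F) := by
  induction F, hF using Set.Finite.induction_on with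
  | empty => rwa [sdiff_empty]
  | insert _ _ ih => rw [← union_singleton, ← sdiff_sdiff]; exact ih.diff_singleton _

end IsBCover

lemma diff_finite_mem_OBs {𝒰 F : Set (Set X)} (h𝒰 : 𝒰 ∈ OBs 𝔅) (hF : F.Finite) :
    𝒰 \ F ∈ OBs 𝔅 :=
  have hcov : IsBCover 𝔅 (𝒰 \ F) := h𝒰.2.2.2.diff_finite hF
  ⟨h𝒰.1.mono sdiff_subset, fun U hU => h𝒰.2.1 U hU.1, hcov.exists_mem, hcov⟩

theorem bsGroupable_iUnion_of_hurSel {F : ℕ → Set (Set X)} (hF : Monotone F)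
    (hFfin : ∀ n, (F n).Finite) {𝒱 : ℕ → Set (Set X)}
    (h𝒱 : ∀ n, 𝒱 n ⊆ (⋃ k, F k) \ F n ∧ (𝒱 n).Finite) (hHS : HurSel 𝔅 𝒱) :
    BsGroupable 𝔅 (⋃ n, F n) := by
  choose f hf_lt hf_sub using fun n =>
    hF.exists_lt_subset_of_finite (h𝒱 n).2 ((h𝒱 n).1.trans sdiff_subset) n
  set m : ℕ → ℕ := fun k => f^[k] 0
  have hm_succ (k : ℕ) : m (k + 1) = f (m k) := Function.iterate_succ_apply' f k 0
  have hm : StrictMono m := strictMono_nat_of_lt_succ fun k => hm_succ k ▸ hf_lt (m k)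
  have hFm : Monotone (F ∘ m) := hF.comp hm.monotone
  refine ⟨disjointed (F ∘ m), fun k => (hFfin _).subset (disjointed_subset _ k),
    fun _ _ hkl => disjoint_disjointed _ hkl,
    iUnion_disjointed.trans (hF.iUnion_comp_tendsto_atTop hm.tendsto_atTop), ?_⟩
  intro B hB
  obtain ⟨n₀, hn₀⟩ := hHS B hB
  refine ⟨n₀ + 1, fun n hn => ?_⟩
  obtain ⟨k, rfl⟩ : ∃ k, n = k + 1 := ⟨n - 1, by omega⟩
  obtain ⟨δ, hδ, U, hU, hBU⟩ := hn₀ (m k) (le_trans (by omega : n₀ ≤ k) hm.le_apply)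
  have hblock : 𝒱 (m k) ⊆ disjointed (F ∘ m) (k + 1) := by
    rw [hFm.disjointed_add_one]
    exact fun V hV =>
      ⟨(hm_succ k ▸ hf_sub (m k) hV : V ∈ F (m (k + 1))), ((h𝒱 (m k)).1 hV).2⟩
  exact ⟨δ, hδ, U, hblock hU, hBU⟩

end

theorem stmt15_general (𝔅 : BornologyOn X)
    (h : BsHurewicz 𝔅) : ∀ 𝒰 ∈ OBs 𝔅, BsGroupable 𝔅 𝒰 := by
  intro 𝒰 h𝒰
  obtain ⟨F, hF, hFfin, rfl⟩ := h𝒰.1.exists_monotone_finite_iUnion_eq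
  obtain ⟨𝒱, h𝒱, hHS⟩ :=
    h (fun n => (⋃ k, F k) \ F n) fun n => diff_finite_mem_OBs h𝒰 (hFfin n)
  exact bsGroupable_iUnion_of_hurSel hF hFfin h𝒱 hHS

theorem stmt15 (𝔅 : BornologyOn X) (hcb : HasClosedBase 𝔅)
    (h : BsHurewicz 𝔅) : ∀ 𝒰 ∈ OBs 𝔅, BsGroupable 𝔅 𝒰 :=
  stmt15_general 𝔅 h
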